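/- arXiv:2511.16975 — 2 statements merged into one kernel-verified Lean document; each statement's English description precedes it below -/
import Mathlib

section
/- For every positive integer n and every complex z with |z| < 1, we have ∑_{k: gcd(k,n)=1, 1≤k≤n} log(1 - z·ζ_n^k) = -∑_{m=1}^∞ c_n(m) z^m / m, where c_n(m) = ∑_{gcd(k,n)=1} e^{2πikm/n} is the Ramanujan sum. -/
open Complex Finset

/-- The Ramanujan sum `c_n(m) = ∑_{1 ≤ k ≤ n, gcd(k,n)=1} e^{2πikm/n}`. -/
noncomputable def ramanujanSum (n m : ℕ) : ℂ :=
  ∑ k ∈ (Finset.Icc 1 n).filter (fun k => Nat.gcd k n = 1),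
    Complex.exp (2 * Real.pi * Complex.I * k * m / n)

theorem sum_log_eq_neg_tsum_ramanujan (n : ℕ) (hn : 1 ≤ n) (z : ℂ)
    (hz : ‖z‖ < 1) :
    ∑ k ∈ (Finset.Icc 1 n).filter (fun k => Nat.gcd k n = 1),
      Complex.log (1 - z * Complex.exp (2 * Real.pi * Complex.I * k / n)) =
    -∑' m : ℕ, ramanujanSum n (m + 1) * z ^ (m + 1) / (m + 1) := by
  set s := (Finset.Icc 1 n).filter (fun k => Nat.gcd k n = 1) with hs
  have hw : ∀ k : ℕ, ‖z * Complex.exp (2 * Real.pi * Complex.I * k / n)‖ < 1 := by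
    intro k
    rw [norm_mul]
    have harg : (2 * Real.pi * Complex.I * k / n) = ((2 * Real.pi * k / n : ℝ) : ℂ) * Complex.I := by
      push_cast
      ring
    rw [harg]
    have : ‖Complex.exp (((2 * Real.pi * k / n : ℝ) : ℂ) * Complex.I)‖ = 1 := by
      rw [Complex.norm_exp_ofReal_mul_I]
    rw [this, mul_one]
    exact hz
  have H : ∀ k ∈ s, HasSum
      (fun m : ℕ => (z * Complex.exp (2 * Real.pi * Complex.I * k / n)) ^ m / m)
      (-Complex.log (1 - z * Complex.exp (2 * Real.pi * Complex.I * k / n))) :=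
    fun k _ => Complex.hasSum_taylorSeries_neg_log (hw k)
  have H2 := hasSum_sum H
  have key : (fun m : ℕ => ∑ k ∈ s,
      (z * Complex.exp (2 * Real.pi * Complex.I * k / n)) ^ m / m) =
      fun m : ℕ => ramanujanSum n m * z ^ m / m := by
    funext m
    rw [ramanujanSum, ← hs, Finset.sum_mul, Finset.sum_div]
    refine Finset.sum_congr rfl fun k _ => ?_
    rw [mul_pow, ← Complex.exp_nat_mul,
      show ((m : ℂ) * (2 * Real.pi * Complex.I * k / n)) =
        2 * Real.pi * Complex.I * k * m / n by push_cast; ring]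
    ring
  rw [key] at H2
  have h0 : ramanujanSum n 0 * z ^ 0 / (0 : ℕ) = 0 := by
    simp
  have H3 : HasSum (fun m : ℕ => ramanujanSum n (m + 1) * z ^ (m + 1) / (m + 1))
      (∑ k ∈ s, -Complex.log (1 - z * Complex.exp (2 * Real.pi * Complex.I * k / n))) := by
    have h := (hasSum_nat_add_iff' (f := fun m : ℕ => ramanujanSum n m * z ^ m / m)
      (g := ∑ k ∈ s, -Complex.log (1 - z * Complex.exp (2 * Real.pi * Complex.I * k / n)))
      1).mpr H2
    simp only [Finset.range_one, Finset.sum_singleton, h0, sub_zero] at h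
    convert h using 2 with m
    · rfl
    push_cast
    ring_nf
  rw [H3.tsum_eq, Finset.sum_neg_distrib, neg_neg]
end

section
/- For |z| < 1, the power series identity ∑_{n≥1} 4(d_1(n) - d_3(n)) z^n = ∑_{i≥0} [4 z^{4i+1}/(1 - z^{4i+1}) - 4 z^{4i+3}/(1 - z^{4i+3})] holds, where d_1(n), d_3(n) count divisors of n congruent to 1 resp. 3 mod 4. -/
open Finset

/-- `d_j(n)`: the number of divisors of `n` congruent to `j` mod 4. -/
def dMod4 (j n : ℕ) : ℕ := (n.divisors.filter (fun d => d % 4 = j)).card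

/-- The nontrivial character mod 4 (as a function on `ℕ` with values in `ℂ`). -/
noncomputable def chi4 (d : ℕ) : ℂ :=
  if d % 4 = 1 then 1 else if d % 4 = 3 then -1 else 0

lemma chi4_norm_le (d : ℕ) : ‖chi4 d‖ ≤ 1 := by
  unfold chi4; split_ifs <;> simp

lemma sum_chi4_divisors (n : ℕ) :
    ∑ d ∈ n.divisors, chi4 d = (dMod4 1 n : ℂ) - (dMod4 3 n : ℂ) := by
  have h : ∀ d : ℕ, chi4 d =
      (if d % 4 = 1 then (1 : ℂ) else 0) - (if d % 4 = 3 then (1 : ℂ) else 0) := by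
    intro d
    unfold chi4
    split_ifs with h1 h2 h3 <;> first | ring1 | omega
  simp_rw [h, Finset.sum_sub_distrib, Finset.sum_boole, dMod4]

set_option maxHeartbeats 1000000 in
theorem sum_r2_formula_eq_lambert (z : ℂ) (hz : ‖z‖ < 1) :
    ∑' n : ℕ, 4 * ((dMod4 1 (n + 1) : ℂ) - (dMod4 3 (n + 1) : ℂ)) * z ^ (n + 1) =
      ∑' i : ℕ, (4 * z ^ (4 * i + 1) / (1 - z ^ (4 * i + 1)) -
                 4 * z ^ (4 * i + 3) / (1 - z ^ (4 * i + 3))) := by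
  have ha0 : (0 : ℝ) ≤ ‖z‖ := norm_nonneg z
  set a : ℝ := ‖z‖ with ha
  -- the double series
  set F : ℕ × ℕ → ℂ := fun p =>
    if p.1 = 0 ∨ p.2 = 0 then 0 else 4 * chi4 p.1 * z ^ (p.1 * p.2) with hF
  set sh : ℕ × ℕ → ℕ × ℕ := fun p => (p.1 + 1, p.2 + 1) with hsh
  have hinj : Function.Injective sh := by
    intro p q h
    simp only [hsh, Prod.mk.injEq, add_left_inj] at h
    exact Prod.ext h.1 h.2
  have hvanish : ∀ x ∉ Set.range sh, F x = 0 := by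
    rintro ⟨x1, x2⟩ hx
    rcases x1 with _ | x1
    · simp [hF]
    rcases x2 with _ | x2
    · simp [hF]
    exact absurd ⟨(x1, x2), rfl⟩ hx
  have hznorm : ∀ n : ℕ, ‖z ^ n‖ = a ^ n := by
    intro n; rw [norm_pow]
  -- summability of the shifted series
  have hbound : ∀ p : ℕ × ℕ,
      ‖(F ∘ sh) p‖ ≤ (4 * a) * (a ^ p.1 * a ^ p.2) := by
    rintro ⟨p1, p2⟩
    have hne : ¬((p1 + 1 = 0) ∨ (p2 + 1 = 0)) := by omega
    simp only [Function.comp_apply, hsh, hF, hne, if_false]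
    rw [norm_mul, norm_mul, hznorm]
    have h1 : ‖(4 : ℂ)‖ = 4 := by norm_num
    have h2 : a ^ ((p1 + 1) * (p2 + 1)) ≤ a ^ (p1 + p2 + 1) := by
      apply pow_le_pow_of_le_one ha0 hz.le
      nlinarith [Nat.zero_le p1, Nat.zero_le p2]
    calc ‖(4 : ℂ)‖ * ‖chi4 (p1 + 1)‖ * a ^ ((p1 + 1) * (p2 + 1))
        ≤ 4 * 1 * a ^ (p1 + p2 + 1) := by
          apply mul_le_mul _ h2 (pow_nonneg ha0 _) (by norm_num)
          rw [h1]
          exact mul_le_mul_of_nonneg_left (chi4_norm_le _) (by norm_num)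
      _ = (4 * a) * (a ^ p1 * a ^ p2) := by ring
  have hgeo : Summable fun n : ℕ => a ^ n := summable_geometric_of_lt_one ha0 hz
  have hFS : Summable (F ∘ sh) := by
    apply Summable.of_norm_bounded _ hbound
    exact (hgeo.mul_of_nonneg hgeo (fun n => pow_nonneg ha0 n)
      (fun n => pow_nonneg ha0 n)).mul_left (4 * a)
  have hFsum : Summable F := (hinj.summable_iff hvanish).mp hFS
  set S : ℂ := ∑' p, F p with hS
  -- fiberwise sums give the coefficients
  have hfib : HasSum (fun n : ℕ =>
      ∑' b : ((fun p : ℕ × ℕ => p.1 * p.2) ⁻¹' {n}), F b) S :=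
    hFsum.hasSum.tsum_fiberwise (fun p => p.1 * p.2)
  set g : ℕ → ℂ := fun n => 4 * ((dMod4 1 n : ℂ) - (dMod4 3 n : ℂ)) * z ^ n with hg
  have hg0 : g 0 = 0 := by simp [hg, dMod4]
  have hfibeq : ∀ n : ℕ,
      (∑' b : ((fun p : ℕ × ℕ => p.1 * p.2) ⁻¹' {n}), F b) = g n := by
    intro n
    rcases eq_or_ne n 0 with rfl | hn
    · have hzero : ∀ b : ((fun p : ℕ × ℕ => p.1 * p.2) ⁻¹' {0}), F b = 0 := by
        rintro ⟨⟨p1, p2⟩, hp⟩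
        simp only [Set.mem_preimage, Set.mem_singleton_iff, Nat.mul_eq_zero] at hp
        simp only [hF]
        rcases hp with rfl | rfl <;> simp
      rw [tsum_congr hzero, tsum_zero, hg0]
    · rw [show (fun p : ℕ × ℕ => p.1 * p.2) ⁻¹' {n} = ↑n.divisorsAntidiagonal by
        ext p; simp [Nat.mem_divisorsAntidiagonal, hn, eq_comm],
        Finset.tsum_subtype' n.divisorsAntidiagonal F]
      have hterm : ∀ p ∈ n.divisorsAntidiagonal, F p = 4 * chi4 p.1 * z ^ n := by
        intro p hp
        obtain ⟨h1, h2⟩ := Nat.ne_zero_of_mem_divisorsAntidiagonal hp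
        have h3 : p.1 * p.2 = n := (Nat.mem_divisorsAntidiagonal.mp hp).1
        simp only [hF, h1, h2, or_self, if_false, h3]
      rw [Finset.sum_congr rfl hterm]
      rw [show (∑ p ∈ n.divisorsAntidiagonal, 4 * chi4 p.1 * z ^ n)
          = ∑ p ∈ n.divisorsAntidiagonal, (fun x y : ℕ => 4 * chi4 x * z ^ n) p.1 p.2 from rfl,
        Nat.sum_divisorsAntidiagonal (fun x y : ℕ => 4 * chi4 x * z ^ n)]
      simp_rw [← Finset.sum_mul, ← Finset.mul_sum, sum_chi4_divisors]
      rfl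
  have hGsum : HasSum g S := by
    have := hfib
    rwa [funext hfibeq] at this
  -- the left-hand side equals S
  have hLHS : ∑' n : ℕ, 4 * ((dMod4 1 (n + 1) : ℂ) - (dMod4 3 (n + 1) : ℂ)) * z ^ (n + 1) = S := by
    have h := Summable.tsum_eq_zero_add hGsum.summable
    rw [hGsum.tsum_eq, hg0, zero_add] at h
    exact h.symm
  -- now the right-hand side: Fubini and geometric series
  set A : ℕ → ℂ := fun n => 4 * chi4 n * (z ^ n * (1 - z ^ n)⁻¹) with hA
  have hA0 : A 0 = 0 := by simp [hA, chi4]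
  have hchi0 : ∀ n : ℕ, n % 4 = 0 ∨ n % 4 = 2 → chi4 n = 0 := by
    intro n hn; unfold chi4; rcases hn with h | h <;> simp [h]
  -- inner geometric sums
  have hinner : ∀ d : ℕ, (∑' m : ℕ, (F ∘ sh) (d, m)) = A (d + 1) := by
    intro d
    have hlt : ‖z ^ (d + 1)‖ < 1 := by
      rw [hznorm]; exact pow_lt_one₀ ha0 hz (Nat.succ_ne_zero d)
    have hrw : ∀ m : ℕ, (F ∘ sh) (d, m) =
        (4 * chi4 (d + 1) * z ^ (d + 1)) * (z ^ (d + 1)) ^ m := by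
      intro m
      have hne : ¬((d + 1 = 0) ∨ (m + 1 = 0)) := by omega
      simp only [Function.comp_apply, hsh, hF, hne, if_false]
      rw [pow_mul, pow_succ']
      ring
    rw [tsum_congr hrw, tsum_mul_left, tsum_geometric_of_norm_lt_one hlt, hA]
    ring
  have hFubini : S = ∑' d : ℕ, A (d + 1) := by
    have hsupp : Function.support F ⊆ Set.range sh := by
      intro x hx
      by_contra hxr
      exact hx (hvanish x hxr)
    rw [hS, ← hinj.tsum_eq hsupp,
      Summable.tsum_prod (f := fun c : ℕ × ℕ => F (sh c)) hFS]
    exact tsum_congr fun d => hinner d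
  -- summability of A
  have hapos : (0 : ℝ) < 1 - a := by linarith
  have hAbound : ∀ n : ℕ, ‖A n‖ ≤ (4 * (1 - a)⁻¹) * a ^ n := by
    intro n
    rcases n with _ | m
    · rw [hA0, norm_zero]
      positivity
    · have hle : 1 - a ≤ ‖1 - z ^ (m + 1)‖ := by
        have h1 : a ^ (m + 1) ≤ a := by
          calc a ^ (m + 1) ≤ a ^ 1 := pow_le_pow_of_le_one ha0 hz.le (by omega)
            _ = a := pow_one a
        have h2 : ‖(1 : ℂ)‖ - ‖z ^ (m + 1)‖ ≤ ‖1 - z ^ (m + 1)‖ :=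
          norm_sub_norm_le _ _
        rw [norm_one, hznorm] at h2
        calc 1 - a ≤ 1 - a ^ (m + 1) := by linarith
          _ ≤ ‖1 - z ^ (m + 1)‖ := h2
          _ = ‖1 - z ^ (m + 1)‖ := rfl
      have hinv : ‖(1 - z ^ (m + 1))⁻¹‖ ≤ (1 - a)⁻¹ := by
        rw [norm_inv]
        exact inv_anti₀ hapos hle
      simp only [hA, norm_mul, hznorm]
      have h4 : ‖(4 : ℂ)‖ = 4 := by norm_num
      calc ‖(4 : ℂ)‖ * ‖chi4 (m + 1)‖ * (a ^ (m + 1) * ‖(1 - z ^ (m + 1))⁻¹‖)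
          ≤ 4 * 1 * (a ^ (m + 1) * (1 - a)⁻¹) := by
            apply mul_le_mul
            · rw [h4]; exact mul_le_mul_of_nonneg_left (chi4_norm_le _) (by norm_num)
            · exact mul_le_mul_of_nonneg_left hinv (pow_nonneg ha0 _)
            · positivity
            · norm_num
        _ = (4 * (1 - a)⁻¹) * a ^ (m + 1) := by ring
  have hAsum : Summable A :=
    Summable.of_norm_bounded (hgeo.mul_left _) hAbound
  have hshift : S = ∑' n : ℕ, A n := by
    rw [hFubini, Summable.tsum_eq_zero_add hAsum, hA0, zero_add]
  -- regroup the sum over residue classes mod 4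
  have he : ∑' n : ℕ, A n = ∑' p : ℕ × Fin 4, A ((Nat.divModEquiv 4).symm p) :=
    ((Nat.divModEquiv 4).symm.tsum_eq A).symm
  have hAsum' : Summable fun p : ℕ × Fin 4 => A ((Nat.divModEquiv 4).symm p) :=
    (Nat.divModEquiv 4).symm.summable_iff.mpr hAsum
  have hfinal : ∑' n : ℕ, A n =
      ∑' i : ℕ, (4 * z ^ (4 * i + 1) / (1 - z ^ (4 * i + 1)) -
                 4 * z ^ (4 * i + 3) / (1 - z ^ (4 * i + 3))) := by
    rw [he, Summable.tsum_prod hAsum']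
    apply tsum_congr
    intro i
    rw [tsum_fintype]
    have : ∀ r : Fin 4, A ((Nat.divModEquiv 4).symm (i, r)) = A (i * 4 + (r : ℕ)) := by
      intro r; rfl
    rw [Fin.sum_univ_four]
    simp only [this]
    have e0 : A (i * 4 + (((0 : Fin 4)) : ℕ)) = 0 := by
      rw [show (((0 : Fin 4)) : ℕ) = 0 from rfl, Nat.add_zero]
      have hzero : chi4 (i * 4) = 0 := hchi0 _ (by omega)
      show 4 * chi4 (i * 4) * (z ^ (i * 4) * (1 - z ^ (i * 4))⁻¹) = 0
      rw [hzero]; ring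
    have e2 : A (i * 4 + (((2 : Fin 4)) : ℕ)) = 0 := by
      rw [show (((2 : Fin 4)) : ℕ) = 2 from rfl]
      have hzero : chi4 (i * 4 + 2) = 0 := hchi0 _ (by omega)
      show 4 * chi4 (i * 4 + 2) * (z ^ (i * 4 + 2) * (1 - z ^ (i * 4 + 2))⁻¹) = 0
      rw [hzero]; ring
    have e1 : A (i * 4 + (((1 : Fin 4)) : ℕ)) = 4 * z ^ (4 * i + 1) / (1 - z ^ (4 * i + 1)) := by
      rw [show (((1 : Fin 4)) : ℕ) = 1 from rfl, show i * 4 + 1 = 4 * i + 1 by ring]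
      have hc : chi4 (4 * i + 1) = 1 := by
        unfold chi4
        have h : (4 * i + 1) % 4 = 1 := by omega
        simp [h]
      show 4 * chi4 (4 * i + 1) * (z ^ (4 * i + 1) * (1 - z ^ (4 * i + 1))⁻¹) = _
      rw [hc, div_eq_mul_inv]; ring
    have e3 : A (i * 4 + (((3 : Fin 4)) : ℕ)) =
        -(4 * z ^ (4 * i + 3) / (1 - z ^ (4 * i + 3))) := by
      rw [show (((3 : Fin 4)) : ℕ) = 3 from rfl, show i * 4 + 3 = 4 * i + 3 by ring]
      have hc : chi4 (4 * i + 3) = -1 := by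
        unfold chi4
        have h : (4 * i + 3) % 4 = 3 := by omega
        simp [h]
      show 4 * chi4 (4 * i + 3) * (z ^ (4 * i + 3) * (1 - z ^ (4 * i + 3))⁻¹) = _
      rw [hc, div_eq_mul_inv]; ring
    rw [e0, e1, e2, e3]
    ring
  rw [hLHS, hshift, hfinal]
end
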